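/- arXiv:2007.05108 — 5 statements merged into one kernel-verified Lean document; each statement's English description precedes it below -/
import Mathlib

section
/- For every prime power q and integers n ≥ c ≥ 1, the number of pairs (𝒜, (U_1, …, U_c)), where 𝒜 is an alternating matrix space in Λ(n,q) and (U_1, …, U_c) is an ordered tuple of nonzero subspaces with F_qⁿ = U_1 ⊕ ⋯ ⊕ U_c such that u_iᵀAu_j = 0 for all i ≠ j, u_i ∈ U_i, u_j ∈ U_j, and A ∈ 𝒜, equals Σ_{(n_1,…,n_c)} (q^{C(n,2)}·[n]_q!)/((q^{C(n_1,2)}·[n_1]_q!)⋯(q^{C(n_c,2)}·[n_c]_q!)) · G_q(Σ_{i∈[c]} C(n_i,2)), where the sum is over all ordered c-partitions (n_1,…,n_c) of n into positive integers. -/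
/-!
Fix the decomposition `U = (U_1, …, U_c)` first. The admissible spaces `𝒜` are exactly the
subspaces of `Λ(n,q) ∩ {A | U_i and U_j are A-orthogonal for i ≠ j}`. In a basis adapted to `U`
this space becomes the space of block-diagonal alternating matrices, of dimension `Σ C(n_i, 2)`,
so it has `G_q(Σ C(n_i, 2))` subspaces. The decompositions with `dim U_i = n_i` are counted by
cutting ordered bases of `F_q^n` into blocks of sizes `n_i`: every such decomposition arises from
`∏ |GL(n_i, q)|` ordered bases, and `|GL(m, q)| = q^C(m,2) (q - 1)^m [m]_q!`. The same double
counting gives `[m choose d]_q` subspaces of dimension `d` in `F_q^m`, whence the Galois number.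
-/

open Matrix BigOperators

/-- The space of n×n alternating matrices over a field `F`. -/
def altSpace (n : ℕ) (F : Type) [Field F] : Submodule F (Matrix (Fin n) (Fin n) F) where
  carrier := {A | ∀ v : Fin n → F, v ⬝ᵥ A *ᵥ v = 0}
  add_mem' := by
    intro A B hA hB v
    simp only [Set.mem_setOf_eq] at *
    rw [Matrix.add_mulVec, dotProduct_add, hA v, hB v, add_zero]
  zero_mem' := by intro v; simp
  smul_mem' := by
    intro c A hA v
    simp only [Set.mem_setOf_eq] at *
    rw [smul_mulVec, dotProduct_smul, hA v, smul_zero]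

/-- The q-integer `[n]_q = q^{n-1} + ⋯ + q + 1`. -/
def qInt (q n : ℕ) : ℕ := ∑ i ∈ Finset.range n, q ^ i

/-- The q-factorial `[n]_q!`. -/
def qFact (q : ℕ) : ℕ → ℕ
  | 0 => 1
  | n + 1 => qInt q (n + 1) * qFact q n

/-- The Gaussian binomial coefficient `[n choose k]_q`, as a rational number. -/
def qBinom (q n k : ℕ) : ℚ := (qFact q n : ℚ) / ((qFact q k : ℚ) * (qFact q (n - k) : ℚ))

/-- The Galois number `G_q(m) = Σ_{d=0}^m [m choose d]_q`. -/
def galois (q m : ℕ) : ℚ := ∑ d ∈ Finset.range (m + 1), qBinom q m d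

/-- Ordered c-partitions of n into positive integers. -/
def partitions (c n : ℕ) : Finset (Fin c → ℕ) :=
  (Finset.Nat.antidiagonalTuple c n).filter fun ν => ∀ i, 0 < ν i

section QAnalogue

lemma qFact_pos {q : ℕ} (hq : 0 < q) (k : ℕ) : 0 < qFact q k := by
  induction k with
  | zero => exact Nat.one_pos
  | succ k ih =>
    exact Nat.mul_pos (Finset.sum_pos (fun i _ => pow_pos hq i) ⟨0, by simp⟩) ih

lemma qInt_mul_sub_one (q k : ℕ) : (qInt q k : ℚ) * (q - 1) = (q : ℚ) ^ k - 1 := by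
  push_cast [qInt]
  exact geom_sum_mul _ _

lemma prod_pow_sub_pow_mul_qFact (q d r : ℕ) :
    (∏ i : Fin d, ((q : ℚ) ^ (d + r) - q ^ (i : ℕ))) * qFact q r =
      q ^ d.choose 2 * (q - 1) ^ d * qFact q (d + r) := by
  induction d generalizing r with
  | zero => simp
  | succ d ih =>
    have hlast : (q : ℚ) ^ (d + (r + 1)) - q ^ d = q ^ d * (qInt q (r + 1) * (q - 1)) := by
      rw [qInt_mul_sub_one]; ring
    have hfact : (qFact q (r + 1) : ℚ) = qInt q (r + 1) * qFact q r := by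
      push_cast [qFact]; rfl
    rw [Fin.prod_univ_castSucc, Nat.choose_succ_succ', Nat.choose_one_right,
      show d + 1 + r = d + (r + 1) by ring]
    have ih' := ih (r + 1)
    rw [hfact] at ih'
    simp only [Fin.val_castSucc, Fin.val_last]
    rw [hlast]
    linear_combination (q : ℚ) ^ d * (q - 1) * ih'

lemma natCast_prod_pow_sub_pow {q : ℕ} (hq : 0 < q) {d m : ℕ} (hdm : d ≤ m) :
    ((∏ i : Fin d, (q ^ m - q ^ (i : ℕ)) : ℕ) : ℚ) =
      q ^ d.choose 2 * (q - 1) ^ d * qFact q m / qFact q (m - d) := by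
  obtain ⟨r, rfl⟩ := Nat.exists_eq_add_of_le hdm
  rw [eq_div_iff (by exact_mod_cast (qFact_pos hq _).ne'), add_tsub_cancel_left,
    ← prod_pow_sub_pow_mul_qFact, Nat.cast_prod]
  congr 1
  refine Finset.prod_congr rfl fun i _ => ?_
  rw [Nat.cast_sub (Nat.pow_le_pow_right hq (by omega))]
  push_cast
  rfl

lemma natCast_prod_pow_sub_pow_self {q : ℕ} (hq : 0 < q) (m : ℕ) :
    ((∏ i : Fin m, (q ^ m - q ^ (i : ℕ)) : ℕ) : ℚ) = q ^ m.choose 2 * (q - 1) ^ m * qFact q m := by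
  rw [natCast_prod_pow_sub_pow hq le_rfl, Nat.sub_self, qFact, Nat.cast_one, div_one]

end QAnalogue

theorem Nat.card_subtype_eq_card_mul_of_card_fiber {α β : Type*} {p : α → Prop} {r : β → Prop}
    [Finite {a // p a}] [Finite {b // r b}] (g : α → β) (hg : ∀ a, p a → r (g a)) {N : ℕ}
    (h : ∀ b, r b → Nat.card {a // p a ∧ g a = b} = N) :
    Nat.card {a // p a} = Nat.card {b // r b} * N := by
  have := Fintype.ofFinite {b // r b}
  let f : {a // p a} → {b // r b} := fun a => ⟨g a, hg a a.2⟩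
  rw [← Nat.card_congr (Equiv.sigmaFiberEquiv f), Nat.card_sigma, Nat.card_eq_fintype_card,
    ← smul_eq_mul, ← Finset.card_univ, ← Finset.sum_const]
  refine Finset.sum_congr rfl fun b _ => (Nat.card_congr ?_).trans (h b.1 b.2)
  exact
    { toFun := fun a => ⟨a.1.1, a.1.2, congrArg Subtype.val a.2⟩
      invFun := fun a => ⟨⟨a.1, a.2.1⟩, Subtype.ext a.2.2⟩
      left_inv := fun _ => rfl
      right_inv := fun _ => rfl }

theorem Nat.cast_card_sigma_eq_sum_card_fiber {R α κ : Type*} [Semiring R] [Finite α]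
    [DecidableEq κ] {X : α → Type*} [∀ a, Finite (X a)] (g : α → κ) (t : Finset κ)
    (hg : ∀ a, g a ∈ t) (N : κ → R) (hX : ∀ a, (Nat.card (X a) : R) = N (g a)) :
    (Nat.card (Σ a, X a) : R) = ∑ k ∈ t, Nat.card {a // g a = k} * N k := by
  have := Fintype.ofFinite α
  rw [Nat.card_sigma, Nat.cast_sum, ← Finset.sum_fiberwise_of_maps_to fun a _ => hg a]
  refine Finset.sum_congr rfl fun k _ => ?_
  rw [Finset.sum_congr rfl fun a ha => by rw [hX, (Finset.mem_filter.1 ha).2], Finset.sum_const,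
    nsmul_eq_mul, Nat.card_eq_fintype_card, Fintype.card_subtype]

instance Submodule.finite_of_finite {R M : Type*} [Semiring R] [AddCommMonoid M] [Module R M]
    [Finite M] : Finite (Submodule R M) :=
  Finite.of_injective _ SetLike.coe_injective

section Subspaces

variable {K V : Type*} [DivisionRing K] [Fintype K] [AddCommGroup V] [Module K V] [Finite V]

local notation "q" => Fintype.card K

def linearIndependentSpanEqEquiv {ι : Type*} [Fintype ι] (W : Submodule K V)
    (hW : Fintype.card ι = Module.finrank K W) :
    {s : ι → V // LinearIndependent K s ∧ Submodule.span K (Set.range s) = W} ≃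
      {t : ι → W // LinearIndependent K t} where
  toFun s := ⟨fun i => ⟨s.1 i, s.2.2.le (Submodule.subset_span ⟨i, rfl⟩)⟩,
    .of_comp W.subtype s.2.1⟩
  invFun t := ⟨fun i => t.1 i, t.2.map' W.subtype W.ker_subtype,
    (Submodule.span_range_subtype_eq_top_iff W _).1 (t.2.span_eq_top_of_card_eq_finrank' hW)⟩
  left_inv _ := rfl
  right_inv _ := rfl

lemma card_linearIndependent_span_eq {d : ℕ} (W : Submodule K V) (hW : Module.finrank K W = d) :
    Nat.card {s : Fin d → V // LinearIndependent K s ∧ Submodule.span K (Set.range s) = W} =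
      ∏ i : Fin d, (q ^ d - q ^ (i : ℕ)) := by
  rw [Nat.card_congr (linearIndependentSpanEqEquiv W (by simp [hW])),
    card_linearIndependent hW.ge, hW]

lemma card_submodule_finrank_eq_mul {d : ℕ} (hd : d ≤ Module.finrank K V) :
    Nat.card {W : Submodule K V // Module.finrank K W = d} * ∏ i : Fin d, (q ^ d - q ^ (i : ℕ)) =
      ∏ i : Fin d, (q ^ Module.finrank K V - q ^ (i : ℕ)) := by
  rw [← card_linearIndependent hd]
  refine (Nat.card_subtype_eq_card_mul_of_card_fiber (fun s => Submodule.span K (Set.range s))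
    (fun s hs => by rw [finrank_span_eq_card hs, Fintype.card_fin]) fun W hW => ?_).symm
  exact card_linearIndependent_span_eq W hW

lemma natCast_card_submodule_finrank_eq {d : ℕ} (hd : d ≤ Module.finrank K V) :
    (Nat.card {W : Submodule K V // Module.finrank K W = d} : ℚ) =
      qBinom q (Module.finrank K V) d := by
  have h := congrArg (Nat.cast : ℕ → ℚ) (card_submodule_finrank_eq_mul hd)
  rw [Nat.cast_mul, natCast_prod_pow_sub_pow_self Fintype.card_pos,
    natCast_prod_pow_sub_pow Fintype.card_pos hd] at h
  have hq1 : (q : ℚ) - 1 ≠ 0 := sub_ne_zero.2 (by exact_mod_cast Fintype.one_lt_card.ne')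
  have hfact (k : ℕ) : (qFact q k : ℚ) ≠ 0 := by
    exact_mod_cast (qFact_pos Fintype.card_pos k).ne'
  rw [eq_div_iff (hfact _)] at h
  rw [qBinom, eq_div_iff (mul_ne_zero (hfact _) (hfact _))]
  field_simp at h
  linear_combination h

lemma natCast_card_submodule :
    (Nat.card (Submodule K V) : ℚ) = galois q (Module.finrank K V) := by
  let dim : Submodule K V → Fin (Module.finrank K V + 1) :=
    fun W => ⟨Module.finrank K W, Nat.lt_succ_of_le W.finrank_le⟩
  rw [← Nat.card_congr (Equiv.sigmaFiberEquiv dim), Nat.card_sigma, Nat.cast_sum, galois,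
    ← Fin.sum_univ_eq_sum_range]
  refine Finset.sum_congr rfl fun d _ => ?_
  rw [Nat.card_congr (Equiv.subtypeEquivRight fun W => Fin.ext_iff),
    natCast_card_submodule_finrank_eq (Nat.lt_succ_iff.1 d.2)]

lemma natCast_card_le_submodule (W : Submodule K V) :
    (Nat.card {W' : Submodule K V // W' ≤ W} : ℚ) = galois q (Module.finrank K W) := by
  rw [← Nat.card_congr (Submodule.MapSubtype.orderIso W).toEquiv, natCast_card_submodule]

end Subspaces

section Decompositions

variable {K V : Type*} [DivisionRing K] [AddCommGroup V] [Module K V]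
variable {ι : Type*}

lemma DirectSum.IsInternal.linearIndependent_sigma [DecidableEq ι] {U : ι → Submodule K V}
    (hU : DirectSum.IsInternal U) {κ : ι → Type*} {t : ∀ i, κ i → V}
    (ht : ∀ i, LinearIndependent K (t i)) (hspan : ∀ i, Submodule.span K (Set.range (t i)) = U i) :
    LinearIndependent K fun a : Σ i, κ i => t a.1 a.2 := by
  let b i : Module.Basis (κ i) K (U i) :=
    (Module.Basis.span (ht i)).map (LinearEquiv.ofEq _ _ (hspan i))
  convert (hU.collectedBasis b).linearIndependent
  simp [b, hU.collectedBasis_coe, Module.Basis.span_apply]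

lemma DirectSum.IsInternal.sum_finrank_eq [Fintype ι] [DecidableEq ι] [FiniteDimensional K V]
    {U : ι → Submodule K V} (hU : DirectSum.IsInternal U) :
    ∑ i, Module.finrank K (U i) = Module.finrank K V := by
  rw [Module.finrank_eq_card_basis (hU.collectedBasis fun i => Module.finBasis K (U i)),
    Fintype.card_sigma]
  simp

lemma card_isInternal_ne_bot_fiber [DecidableEq ι] {ν : ι → ℕ} (hν : ∀ i, 0 < ν i) :
    Nat.card {U : {U : ι → Submodule K V // DirectSum.IsInternal U ∧ ∀ i, U i ≠ ⊥} //
        (fun i => Module.finrank K (U.1 i)) = ν} =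
      Nat.card {U : ι → Submodule K V //
        DirectSum.IsInternal U ∧ ∀ i, Module.finrank K (U i) = ν i} :=
  Nat.card_congr ((Equiv.subtypeSubtypeEquivSubtypeInter _
      fun U : ι → Submodule K V => (fun i => Module.finrank K (U i)) = ν).trans
    (Equiv.subtypeEquivRight fun U => ⟨fun h => ⟨h.1.1, congrFun h.2⟩, fun h =>
      ⟨⟨h.1, fun i hi => (hν i).ne' (by rw [← h.2 i, hi, finrank_bot])⟩, funext h.2⟩⟩))

variable (K) {ν : ι → ℕ}

def blockSpan (s : (Σ i, Fin (ν i)) → V) (i : ι) : Submodule K V :=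
  Submodule.span K (Set.range fun k => s ⟨i, k⟩)

variable {K}

lemma blockSpan_eq_span_image (s : (Σ i, Fin (ν i)) → V) (i : ι) :
    blockSpan K s i = Submodule.span K (s '' (Sigma.fst ⁻¹' {i})) := by
  rw [blockSpan, ← Set.range_sigmaMk, ← Set.range_comp]
  rfl

lemma finrank_blockSpan {s : (Σ i, Fin (ν i)) → V} (hs : LinearIndependent K s) (i : ι) :
    Module.finrank K (blockSpan K s i) = ν i :=
  (finrank_span_eq_card (hs.comp _ sigma_mk_injective)).trans (Fintype.card_fin _)

variable [Fintype ι] [DecidableEq ι]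

lemma isInternal_blockSpan [FiniteDimensional K V] {s : (Σ i, Fin (ν i)) → V}
    (hs : LinearIndependent K s) (hν : ∑ i, ν i = Module.finrank K V) :
    DirectSum.IsInternal (blockSpan K s) := by
  rw [DirectSum.isInternal_submodule_iff_iSupIndep_and_iSup_eq_top]
  constructor
  · intro i
    refine (hs.disjoint_span_image (disjoint_compl_right (a := Sigma.fst ⁻¹' {i}))).mono
      (blockSpan_eq_span_image s i).le (iSup₂_le fun j hj => ?_)
    rw [blockSpan_eq_span_image]
    refine Submodule.span_mono (Set.image_mono fun a ha => ?_)
    simp_all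
  · change ⨆ i, Submodule.span K _ = ⊤
    rw [← Submodule.span_iUnion, ← Set.range_sigma_eq_iUnion_range]
    exact hs.span_eq_top_of_card_eq_finrank' (by simp [hν])

def blockSpanEqEquiv {U : ι → Submodule K V} (hU : DirectSum.IsInternal U) :
    {s : (Σ i, Fin (ν i)) → V // LinearIndependent K s ∧ blockSpan K s = U} ≃
      ∀ i, {t : Fin (ν i) → V // LinearIndependent K t ∧ Submodule.span K (Set.range t) = U i} where
  toFun s i := ⟨fun k => s.1 ⟨i, k⟩, s.2.1.comp _ sigma_mk_injective, congrFun s.2.2 i⟩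
  invFun t := ⟨fun a => (t a.1).1 a.2,
    hU.linearIndependent_sigma (fun i => (t i).2.1) fun i => (t i).2.2, funext fun i => (t i).2.2⟩
  left_inv _ := rfl
  right_inv _ := rfl

variable [Fintype K] [Finite V]

local notation "q" => Fintype.card K

lemma card_isInternal_finrank_eq_mul (hν : ∑ i, ν i = Module.finrank K V) :
    Nat.card {U : ι → Submodule K V // DirectSum.IsInternal U ∧ ∀ i, Module.finrank K (U i) = ν i} *
        ∏ i, ∏ k : Fin (ν i), (q ^ ν i - q ^ (k : ℕ)) =
      ∏ k : Fin (Module.finrank K V), (q ^ Module.finrank K V - q ^ (k : ℕ)) := by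
  let e : (Σ i, Fin (ν i)) ≃ Fin (Module.finrank K V) := Fintype.equivFinOfCardEq (by simp [hν])
  rw [← card_linearIndependent le_rfl, ← Nat.card_congr ((e.arrowCongr (Equiv.refl V)).subtypeEquiv
    fun s => (linearIndependent_equiv e.symm).symm)]
  refine (Nat.card_subtype_eq_card_mul_of_card_fiber (blockSpan K) (fun s hs =>
    ⟨isInternal_blockSpan hs hν, finrank_blockSpan hs⟩) fun U hU => ?_).symm
  rw [Nat.card_congr (blockSpanEqEquiv hU.1), Nat.card_pi]
  exact Finset.prod_congr rfl fun i _ => card_linearIndependent_span_eq (U i) (hU.2 i)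

lemma natCast_card_isInternal_finrank_eq (hν : ∑ i, ν i = Module.finrank K V) :
    (Nat.card {U : ι → Submodule K V //
        DirectSum.IsInternal U ∧ ∀ i, Module.finrank K (U i) = ν i} : ℚ) =
      q ^ (Module.finrank K V).choose 2 * qFact q (Module.finrank K V) /
        ∏ i, (q ^ (ν i).choose 2 * qFact q (ν i) : ℚ) := by
  have h := congrArg (Nat.cast : ℕ → ℚ) (card_isInternal_finrank_eq_mul hν)
  rw [Nat.cast_mul, Nat.cast_prod] at h
  simp only [natCast_prod_pow_sub_pow_self Fintype.card_pos] at h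
  have hprod : ∏ i, (q ^ (ν i).choose 2 * ((q : ℚ) - 1) ^ ν i * qFact q (ν i) : ℚ) =
      (∏ i, (q ^ (ν i).choose 2 * qFact q (ν i) : ℚ)) * (q - 1) ^ Module.finrank K V := by
    rw [← hν, ← Finset.prod_pow_eq_pow_sum, ← Finset.prod_mul_distrib]
    exact Finset.prod_congr rfl fun i _ => by ring
  rw [hprod] at h
  have hq1 : (q : ℚ) - 1 ≠ 0 := sub_ne_zero.2 (by exact_mod_cast Fintype.one_lt_card.ne')
  have hne : ∏ i, (q ^ (ν i).choose 2 * qFact q (ν i) : ℚ) ≠ 0 :=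
    Finset.prod_ne_zero_iff.2 fun i _ => mul_ne_zero (pow_ne_zero _ (by simp))
      (by exact_mod_cast (qFact_pos Fintype.card_pos _).ne')
  rw [eq_div_iff hne, ← mul_left_inj' (pow_ne_zero (Module.finrank K V) hq1)]
  linear_combination h

end Decompositions

def alternatingMatrices (ι R : Type*) [Fintype ι] [CommRing R] : Submodule R (Matrix ι ι R) where
  carrier := {A | ∀ v : ι → R, v ⬝ᵥ A *ᵥ v = 0}
  add_mem' hA hB v := by rw [Matrix.add_mulVec, dotProduct_add, hA v, hB v, add_zero]
  zero_mem' v := by simp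
  smul_mem' c A hA v := by rw [smul_mulVec, dotProduct_smul, hA v, smul_zero]

section AlternatingForms

variable {R M : Type*} [CommRing R] [AddCommGroup M] [Module R M]

theorem LinearMap.isAlt_iff_of_basis {ι : Type*} (b : Module.Basis ι R M)
    {B : M →ₗ[R] M →ₗ[R] R} :
    B.IsAlt ↔ (∀ i, B (b i) (b i) = 0) ∧ ∀ i j, B (b i) (b j) + B (b j) (b i) = 0 := by
  refine ⟨fun hB => ⟨fun i => hB (b i), fun i j => ?_⟩, fun ⟨h0, h1⟩ => ?_⟩
  · have h := hB (b i + b j)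
    simp only [map_add, LinearMap.add_apply, hB (b i), hB (b j)] at h
    linear_combination h
  · -- avoiding division by 2: skewness makes `{x | B x x = 0}` closed under addition
    have hskew : B + B.flip = 0 := LinearMap.ext_basis b b fun i j => by simpa using h1 i j
    intro x
    have hx : x ∈ Submodule.span R (Set.range b) := b.span_eq ▸ Submodule.mem_top
    induction hx using Submodule.span_induction with
    | mem x hx => obtain ⟨i, rfl⟩ := hx; exact h0 i
    | zero => simp
    | add x y _ _ hx hy =>
      have hxy := LinearMap.congr_fun₂ hskew x y
      simp only [LinearMap.add_apply, LinearMap.flip_apply, LinearMap.zero_apply] at hxy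
      simp only [map_add, LinearMap.add_apply, hx, hy]
      linear_combination hxy
    | smul c x _ hx => simp [hx]

theorem LinearMap.apply_eq_zero_of_mem_of_basis {κ κ' : Type*} {W W' : Submodule R M}
    (b : Module.Basis κ R W) (b' : Module.Basis κ' R W') {B : M →ₗ[R] M →ₗ[R] R}
    (h : ∀ k l, B (b k) (b' l) = 0) {u u' : M} (hu : u ∈ W) (hu' : u' ∈ W') : B u u' = 0 := by
  have h0 : B.compl₁₂ W.subtype W'.subtype = 0 := LinearMap.ext_basis b b' (by simpa using h)
  simpa using LinearMap.congr_fun₂ h0 ⟨u, hu⟩ ⟨u', hu'⟩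

variable {ι : Type*} [Fintype ι]

section

variable [DecidableEq ι]

lemma mem_alternatingMatrices_iff_isAlt {A : Matrix ι ι R} :
    A ∈ alternatingMatrices ι R ↔ (Matrix.toLinearMap₂' R (S₁ := R) (S₂ := R) A).IsAlt := by
  simp only [LinearMap.IsAlt, Matrix.toLinearMap₂'_apply']
  rfl

lemma mem_alternatingMatrices_iff {A : Matrix ι ι R} :
    A ∈ alternatingMatrices ι R ↔ (∀ i, A i i = 0) ∧ ∀ i j, A i j + A j i = 0 := by
  rw [mem_alternatingMatrices_iff_isAlt, LinearMap.isAlt_iff_of_basis (Pi.basisFun R ι)]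
  simp [Matrix.toLinearMap₂'_apply']

lemma toMatrix₂_mem_alternatingMatrices_iff (b : Module.Basis ι R M) {B : M →ₗ[R] M →ₗ[R] R} :
    LinearMap.toMatrix₂ b b B ∈ alternatingMatrices ι R ↔ B.IsAlt := by
  rw [mem_alternatingMatrices_iff, LinearMap.isAlt_iff_of_basis b]
  simp only [LinearMap.toMatrix₂_apply]

end

def alternatingMatricesEquiv [LinearOrder ι] :
    alternatingMatrices ι R ≃ₗ[R] ({p : ι × ι // p.1 < p.2} → R) where
  toFun A p := A.1 p.1.1 p.1.2
  invFun f :=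
    ⟨fun k l => if h : k < l then f ⟨(k, l), h⟩ else if h : l < k then -f ⟨(l, k), h⟩ else 0, by
      refine mem_alternatingMatrices_iff.2 ⟨fun k => by simp, fun k l => ?_⟩
      rcases lt_trichotomy k l with h | rfl | h
      · simp [h, h.not_gt]
      · simp
      · simp [h, h.not_gt]⟩
  map_add' _ _ := rfl
  map_smul' _ _ := rfl
  left_inv A := by
    obtain ⟨h0, h1⟩ := mem_alternatingMatrices_iff.1 A.2
    ext k l
    rcases lt_trichotomy k l with h | rfl | h
    · simp [h]
    · simp [h0]
    · simp only [h, h.not_gt, dif_pos, dif_neg, not_false_eq_true]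
      linear_combination -h1 k l
  right_inv f := funext fun p => dif_pos p.2

end AlternatingForms

lemma finrank_alternatingMatrices {F ι : Type*} [Field F] [Fintype ι] [LinearOrder ι] :
    Module.finrank F (alternatingMatrices ι F) = (Fintype.card ι).choose 2 := by
  rw [alternatingMatricesEquiv.finrank_eq, Module.finrank_fintype_fun_eq_card,
    Fintype.card_subtype, Fintype.card_product_filter_lt]

section BlockAlternating

variable {R : Type*} [CommRing R] {ι : Type*} [Fintype ι] [DecidableEq ι]
  (κ : ι → Type*) [∀ i, Fintype (κ i)] [∀ i, DecidableEq (κ i)]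

def blockAlternatingMatrices (R : Type*) [CommRing R] :
    Submodule R (Matrix (Σ i, κ i) (Σ i, κ i) R) where
  carrier := {M | M ∈ alternatingMatrices _ R ∧ ∀ a b, a.1 ≠ b.1 → M a b = 0}
  add_mem' hA hB := ⟨add_mem hA.1 hB.1, fun a b h => by simp [hA.2 a b h, hB.2 a b h]⟩
  zero_mem' := ⟨zero_mem _, fun _ _ _ => rfl⟩
  smul_mem' c _ hA := ⟨Submodule.smul_mem _ c hA.1, fun a b h => by simp [hA.2 a b h]⟩

variable {κ}

lemma blockDiag'_mem_alternatingMatrices {M : Matrix (Σ i, κ i) (Σ i, κ i) R}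
    (hM : M ∈ alternatingMatrices _ R) (i : ι) : blockDiag' M i ∈ alternatingMatrices (κ i) R := by
  obtain ⟨h0, h1⟩ := mem_alternatingMatrices_iff.1 hM
  exact mem_alternatingMatrices_iff.2 ⟨fun k => h0 ⟨i, k⟩, fun k l => h1 ⟨i, k⟩ ⟨i, l⟩⟩

lemma blockDiagonal'_mem_alternatingMatrices {N : ∀ i, Matrix (κ i) (κ i) R}
    (hN : ∀ i, N i ∈ alternatingMatrices (κ i) R) :
    blockDiagonal' N ∈ alternatingMatrices _ R := by
  refine mem_alternatingMatrices_iff.2 ⟨fun ⟨i, k⟩ => ?_, fun ⟨i, k⟩ ⟨j, l⟩ => ?_⟩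
  · rw [blockDiagonal'_apply_eq]
    exact (mem_alternatingMatrices_iff.1 (hN i)).1 k
  · by_cases h : i = j
    · subst h
      rw [blockDiagonal'_apply_eq, blockDiagonal'_apply_eq]
      exact (mem_alternatingMatrices_iff.1 (hN i)).2 k l
    · rw [blockDiagonal'_apply_ne _ _ _ h, blockDiagonal'_apply_ne _ _ _ (Ne.symm h), add_zero]

def blockAlternatingMatricesEquiv :
    blockAlternatingMatrices κ R ≃ₗ[R] ∀ i, alternatingMatrices (κ i) R where
  toFun M i := ⟨blockDiag' M.1 i, blockDiag'_mem_alternatingMatrices M.2.1 i⟩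
  invFun N := ⟨blockDiagonal' fun i => (N i).1,
    blockDiagonal'_mem_alternatingMatrices fun i => (N i).2,
    fun _ _ h => blockDiagonal'_apply_ne _ _ _ h⟩
  map_add' _ _ := rfl
  map_smul' _ _ := rfl
  left_inv M := by
    ext ⟨i, k⟩ ⟨j, l⟩
    by_cases h : i = j
    · subst h
      exact blockDiagonal'_apply_eq (blockDiag' M.1) i k l
    · exact (blockDiagonal'_apply_ne (blockDiag' M.1) k l h).trans (M.2.2 ⟨i, k⟩ ⟨j, l⟩ h).symm
  right_inv N := funext fun i =>
    Subtype.ext (congrFun (blockDiag'_blockDiagonal' fun i => (N i).1) i)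

end BlockAlternating

lemma finrank_blockAlternatingMatrices {F ι : Type*} [Field F] [Fintype ι] [DecidableEq ι]
    (ν : ι → ℕ) :
    Module.finrank F (blockAlternatingMatrices (fun i => Fin (ν i)) F) = ∑ i, (ν i).choose 2 := by
  simp [blockAlternatingMatricesEquiv.finrank_eq, Module.finrank_pi_fintype,
    finrank_alternatingMatrices]

section Orthogonal

variable {R : Type*} [CommRing R] {m : Type*} [Fintype m] {ι : Type*}

def orthogonalMatrices (U : ι → Submodule R (m → R)) : Submodule R (Matrix m m R) where
  carrier := {A | ∀ i j, i ≠ j → ∀ u ∈ U i, ∀ u' ∈ U j, u ⬝ᵥ A *ᵥ u' = 0}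
  add_mem' hA hB i j hij u hu u' hu' := by
    rw [Matrix.add_mulVec, dotProduct_add, hA i j hij u hu u' hu', hB i j hij u hu u' hu',
      add_zero]
  zero_mem' _ _ _ _ _ _ _ := by simp
  smul_mem' c _ hA i j hij u hu u' hu' := by
    rw [smul_mulVec, dotProduct_smul, hA i j hij u hu u' hu', smul_zero]

variable [DecidableEq m] [Fintype ι] [DecidableEq ι] {U : ι → Submodule R (m → R)}
  (hU : DirectSum.IsInternal U) {κ : ι → Type*} [∀ i, Fintype (κ i)] [∀ i, DecidableEq (κ i)]
  (bs : ∀ i, Module.Basis (κ i) R (U i))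

noncomputable def collectedGramEquiv : Matrix m m R ≃ₗ[R] Matrix (Σ i, κ i) (Σ i, κ i) R :=
  (Matrix.toLinearMap₂' R).trans
    (LinearMap.toMatrix₂ (hU.collectedBasis bs) (hU.collectedBasis bs))

lemma collectedGramEquiv_apply (A : Matrix m m R) (a b : Σ i, κ i) :
    collectedGramEquiv hU bs A a b = (bs a.1 a.2 : m → R) ⬝ᵥ A *ᵥ (bs b.1 b.2 : m → R) := by
  simp [collectedGramEquiv, LinearMap.toMatrix₂_apply, hU.collectedBasis_coe,
    Matrix.toLinearMap₂'_apply']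

lemma map_collectedGramEquiv :
    (alternatingMatrices m R ⊓ orthogonalMatrices U).map (collectedGramEquiv hU bs).toLinearMap =
      blockAlternatingMatrices κ R := by
  ext M
  obtain ⟨A, rfl⟩ := (collectedGramEquiv hU bs).surjective M
  rw [Submodule.mem_map_equiv, LinearEquiv.symm_apply_apply, Submodule.mem_inf]
  refine Iff.and ?_ ⟨fun hA a b h => ?_, fun hM i j hij u hu u' hu' => ?_⟩
  · rw [mem_alternatingMatrices_iff_isAlt, collectedGramEquiv, LinearEquiv.trans_apply,
      toMatrix₂_mem_alternatingMatrices_iff]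
  · rw [collectedGramEquiv_apply]
    exact hA _ _ h _ (bs a.1 a.2).2 _ (bs b.1 b.2).2
  · rw [← Matrix.toLinearMap₂'_apply']
    refine LinearMap.apply_eq_zero_of_mem_of_basis (bs i) (bs j) (fun k l => ?_) hu hu'
    rw [Matrix.toLinearMap₂'_apply']
    exact (collectedGramEquiv_apply hU bs A ⟨i, k⟩ ⟨j, l⟩).symm.trans (hM ⟨i, k⟩ ⟨j, l⟩ hij)

end Orthogonal

lemma finrank_alternatingMatrices_inf_orthogonalMatrices {F m ι : Type*} [Field F] [Fintype m]
    [DecidableEq m] [Fintype ι] [DecidableEq ι] {U : ι → Submodule F (m → F)}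
    (hU : DirectSum.IsInternal U) :
    Module.finrank F (alternatingMatrices m F ⊓ orthogonalMatrices U : Submodule F _) =
      ∑ i, (Module.finrank F (U i)).choose 2 := by
  rw [← finrank_blockAlternatingMatrices (F := F),
    ← map_collectedGramEquiv hU fun i => Module.finBasis F (U i), LinearEquiv.finrank_map_eq]

lemma natCast_card_le_alternatingMatrices_inf_orthogonalMatrices {F m ι : Type*} [Field F]
    [Fintype F] [Fintype m] [DecidableEq m] [Fintype ι] [DecidableEq ι]
    {U : ι → Submodule F (m → F)} (hU : DirectSum.IsInternal U) :
    (Nat.card {𝒜 // 𝒜 ≤ alternatingMatrices m F ⊓ orthogonalMatrices U} : ℚ) =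
      galois (Fintype.card F) (∑ i, (Module.finrank F (U i)).choose 2) := by
  rw [natCast_card_le_submodule, finrank_alternatingMatrices_inf_orthogonalMatrices hU]

lemma mem_partitions {c n : ℕ} {ν : Fin c → ℕ} :
    ν ∈ partitions c n ↔ ∑ i, ν i = n ∧ ∀ i, 0 < ν i := by
  simp [partitions, Finset.Nat.mem_antidiagonalTuple]

lemma finrank_mem_partitions {K : Type*} [DivisionRing K] {c n : ℕ}
    {U : Fin c → Submodule K (Fin n → K)} (hU : DirectSum.IsInternal U) (hne : ∀ i, U i ≠ ⊥) :
    (fun i => Module.finrank K (U i)) ∈ partitions c n :=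
  mem_partitions.2 ⟨by rw [hU.sum_finrank_eq, Module.finrank_fin_fun],
    fun i => Nat.pos_of_ne_zero fun h => hne i (Submodule.finrank_eq_zero.1 h)⟩

lemma altSpace_eq_alternatingMatrices (n : ℕ) (F : Type) [Field F] :
    altSpace n F = alternatingMatrices (Fin n) F :=
  rfl

def orthogonalPairsEquiv (n : ℕ) (F : Type) [Field F] (ι : Type*) [DecidableEq ι] :
    {p : Submodule F (Matrix (Fin n) (Fin n) F) × (ι → Submodule F (Fin n → F)) //
        p.1 ≤ altSpace n F ∧ DirectSum.IsInternal p.2 ∧ (∀ i, p.2 i ≠ ⊥) ∧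
        ∀ i j, i ≠ j → ∀ u ∈ p.2 i, ∀ u' ∈ p.2 j, ∀ A ∈ p.1, u ⬝ᵥ A *ᵥ u' = 0} ≃
      Σ U : {U : ι → Submodule F (Fin n → F) // DirectSum.IsInternal U ∧ ∀ i, U i ≠ ⊥},
        {𝒜 : Submodule F (Matrix (Fin n) (Fin n) F) //
          𝒜 ≤ alternatingMatrices (Fin n) F ⊓ orthogonalMatrices U.1}
    where
  toFun p := ⟨⟨p.1.2, p.2.2.1, p.2.2.2.1⟩, p.1.1,
    le_inf (p.2.1.trans_eq (altSpace_eq_alternatingMatrices n F))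
      fun A hA i j hij u hu u' hu' => p.2.2.2.2 i j hij u hu u' hu' A hA⟩
  invFun x := ⟨(x.2.1, x.1.1),
    (x.2.2.trans inf_le_left).trans_eq (altSpace_eq_alternatingMatrices n F).symm, x.1.2.1, x.1.2.2,
    fun i j hij u hu u' hu' _ hA => (x.2.2 hA).2 i j hij u hu u' hu'⟩
  left_inv _ := rfl
  right_inv _ := rfl

theorem count_orthogonal_decompositions_general (q n c : ℕ)
    (F : Type) [Field F] [Fintype F] (hF : Fintype.card F = q) :
    (Nat.card {p : Submodule F (Matrix (Fin n) (Fin n) F) × (Fin c → Submodule F (Fin n → F)) //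
        p.1 ≤ altSpace n F ∧ DirectSum.IsInternal p.2 ∧ (∀ i, p.2 i ≠ ⊥) ∧
        ∀ i j, i ≠ j → ∀ u ∈ p.2 i, ∀ u' ∈ p.2 j, ∀ A ∈ p.1, u ⬝ᵥ A *ᵥ u' = 0} : ℚ) =
      ∑ ν ∈ partitions c n,
        (((q : ℚ) ^ (n.choose 2) * (qFact q n : ℚ)) /
            ∏ i, ((q : ℚ) ^ ((ν i).choose 2) * (qFact q (ν i) : ℚ))) *
          galois q (∑ i, (ν i).choose 2) := by
  subst hF
  rw [Nat.card_congr (orthogonalPairsEquiv n F (Fin c)),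
    Nat.cast_card_sigma_eq_sum_card_fiber (fun U i => Module.finrank F (U.1 i)) (partitions c n)
      (fun U => finrank_mem_partitions U.2.1 U.2.2) (fun ν => galois _ (∑ i, (ν i).choose 2))
      fun U => by exact natCast_card_le_alternatingMatrices_inf_orthogonalMatrices U.2.1]
  refine Finset.sum_congr rfl fun ν hν => ?_
  obtain ⟨hsum, hpos⟩ := mem_partitions.1 hν
  rw [card_isInternal_ne_bot_fiber hpos, natCast_card_isInternal_finrank_eq
    (by rw [hsum, Module.finrank_fin_fun]), Module.finrank_fin_fun]

/-- The number of pairs `(𝒜, (U_1, …, U_c))` of an alternating matrix space in `Λ(n,q)`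
together with an ordered direct sum decomposition of `F_q^n` into nonzero subspaces
pairwise orthogonal with respect to every matrix of `𝒜`. -/
theorem count_orthogonal_decompositions (q n c : ℕ) (hq : IsPrimePow q)
    (hc : 1 ≤ c) (hn : c ≤ n)
    (F : Type) [Field F] [Fintype F] (hF : Fintype.card F = q) :
    (Nat.card {p : Submodule F (Matrix (Fin n) (Fin n) F) × (Fin c → Submodule F (Fin n → F)) //
        p.1 ≤ altSpace n F ∧ DirectSum.IsInternal p.2 ∧ (∀ i, p.2 i ≠ ⊥) ∧
        ∀ i j, i ≠ j → ∀ u ∈ p.2 i, ∀ u' ∈ p.2 j, ∀ A ∈ p.1, u ⬝ᵥ A *ᵥ u' = 0} : ℚ) =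
      ∑ ν ∈ partitions c n,
        (((q : ℚ) ^ (n.choose 2) * (qFact q n : ℚ)) /
            ∏ i, ((q : ℚ) ^ ((ν i).choose 2) * (qFact q (ν i) : ℚ))) *
          galois q (∑ i, (ν i).choose 2) :=
  count_orthogonal_decompositions_general q n c F hF
end

section
/- (Gilbert's formula) For every n ≥ 1, n · G_n = Σ_{k=1}^{n} k · C(n,k) · CG_k · G_{n−k}; equivalently, CG_n = G_n − (1/n) · Σ_{k=1}^{n−1} k · C(n,k) · CG_k · G_{n−k}, where G_n = 2^{C(n,2)} is the number of labelled simple graphs on vertex set [n] and CG_n is the number of connected labelled simple graphs on vertex set [n]. -/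
open BigOperators

/-- The number of connected labelled simple graphs on vertex set `[k]`. -/
noncomputable def CG (k : ℕ) : ℕ := Nat.card {G : SimpleGraph (Fin k) // G.Connected}

/-!
Double count the pairs `(v, G)` of a vertex and a graph on `[n]`, sorted by the vertex set `s`
of the connected component of `v`. Since no edge leaves a component, a pair with given `s` amounts
to a vertex of `s`, a connected graph on `s` and an arbitrary graph on the complement of `s`;
the sets `s` of size `k` thus contribute `k * C(n, k) * CG k * 2 ^ C(n - k, 2)`.
-/

open Finset

namespace SimpleGraph

variable {V : Type*}

def equivSetNonDiag (V : Type*) : SimpleGraph V ≃ Set {e : Sym2 V // ¬e.IsDiag} where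
  toFun G := {e | e.1 ∈ G.edgeSet}
  invFun t := fromEdgeSet (Subtype.val '' t)
  left_inv G := by ext a b; simpa [fromEdgeSet_adj] using G.ne_of_adj
  right_inv t := by ext ⟨e, he⟩; simp [edgeSet_fromEdgeSet, he]

theorem card_eq_two_pow_choose [Fintype V] :
    Nat.card (SimpleGraph V) = 2 ^ (Fintype.card V).choose 2 := by
  classical
  rw [Nat.card_congr (equivSetNonDiag V), Nat.card_eq_fintype_card, Fintype.card_set,
    Sym2.card_subtype_not_diag]

theorem card_connected_congr {W : Type*} (e : V ≃ W) :
    Nat.card {G : SimpleGraph V // G.Connected} = Nat.card {G : SimpleGraph W // G.Connected} :=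
  Nat.card_congr <| e.simpleGraph.subtypeEquiv fun G => (Iso.comap e.symm G).connected_iff.symm

def equivInduceProdInduceCompl (s : Set V) [DecidablePred (· ∈ s)] :
    {G : SimpleGraph V // ∀ ⦃a b⦄, G.Adj a b → a ∈ s → b ∈ s} ≃
      SimpleGraph s × SimpleGraph ↥sᶜ where
  toFun G := (G.1.induce s, G.1.induce sᶜ)
  invFun HK := ⟨(Equiv.Set.sumCompl s).simpleGraph (HK.1 ⊕g HK.2), fun a b hab ha => by
    by_contra hb
    simp [Equiv.Set.sumCompl_symm_apply_of_mem ha,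
      Equiv.Set.sumCompl_symm_apply_of_notMem hb] at hab⟩
  left_inv := by
    rintro ⟨G, hG⟩
    ext a b
    by_cases ha : a ∈ s <;> by_cases hb : b ∈ s <;>
      simp [ha, hb, Equiv.Set.sumCompl_symm_apply_of_mem, Equiv.Set.sumCompl_symm_apply_of_notMem]
    · exact fun h => hb (hG h ha)
    · exact fun h => ha (hG h.symm hb)
  right_inv HK := by
    ext a b <;> simp [Equiv.Set.sumCompl_symm_apply, Equiv.Set.sumCompl_symm_apply_compl]

theorem Reachable.mem_of_forall_adj {G : SimpleGraph V} {s : Set V} {a b : V}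
    (h : G.Reachable a b) (hs : ∀ ⦃a b⦄, G.Adj a b → a ∈ s → b ∈ s) (ha : a ∈ s) : b ∈ s := by
  obtain ⟨w⟩ := h
  induction w with
  | nil => exact ha
  | cons hadj _ ih => exact ih (hs hadj ha)

theorem connectedComponentMk_supp_eq_iff {G : SimpleGraph V} {v : V} {s : Set V} :
    (G.connectedComponentMk v).supp = s ↔
      v ∈ s ∧ (∀ ⦃a b⦄, G.Adj a b → a ∈ s → b ∈ s) ∧ (G.induce s).Connected := by
  constructor
  · rintro rfl
    exact ⟨ConnectedComponent.connectedComponentMk_mem,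
      fun a b hab ha => ConnectedComponent.mem_supp_of_adj_mem_supp _ ha hab,
      ConnectedComponent.connected_toSimpleGraph _⟩
  · rintro ⟨hv, hs, hconn⟩
    ext u
    rw [ConnectedComponent.mem_supp_iff, ConnectedComponent.eq]
    exact ⟨fun h => h.symm.mem_of_forall_adj hs hv,
      fun hu => (hconn.preconnected ⟨u, hu⟩ ⟨v, hv⟩).map (Embedding.induce s).toHom⟩

def componentFiberEquiv (s : Set V) [DecidablePred (· ∈ s)] :
    {p : V × SimpleGraph V // (p.2.connectedComponentMk p.1).supp = s} ≃
      s × {H : SimpleGraph s // H.Connected} × SimpleGraph ↥sᶜ :=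
  (Equiv.subtypeEquivRight fun _ => connectedComponentMk_supp_eq_iff).trans <|
    (Equiv.subtypeProdEquivProd (q := fun G : SimpleGraph V =>
      (∀ ⦃a b⦄, G.Adj a b → a ∈ s → b ∈ s) ∧ (G.induce s).Connected)).trans <|
      Equiv.prodCongr (Equiv.refl _) <|
      (Equiv.subtypeSubtypeEquivSubtypeInter _ _).symm.trans <|
        ((equivInduceProdInduceCompl s).subtypeEquiv fun _ => Iff.rfl).trans
          Equiv.prodSubtypeFstEquivSubtypeProd

theorem card_mul_two_pow_choose_eq_sum_finset [Fintype V] :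
    Fintype.card V * 2 ^ (Fintype.card V).choose 2 =
      ∑ s : Finset V, #s * Nat.card {H : SimpleGraph s // H.Connected} *
        2 ^ (Fintype.card V - #s).choose 2 := by
  classical
  let component (p : V × SimpleGraph V) : Finset V := (p.2.connectedComponentMk p.1).supp.toFinset
  calc Fintype.card V * 2 ^ (Fintype.card V).choose 2
      = Nat.card (Σ s, {p // component p = s}) := by
        rw [Nat.card_congr (Equiv.sigmaFiberEquiv component), Nat.card_prod,
          Nat.card_eq_fintype_card, card_eq_two_pow_choose]
    _ = _ := by
        rw [Nat.card_sigma]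
        refine sum_congr rfl fun s _ => ?_
        have hfiber : ∀ p, component p = s ↔ (p.2.connectedComponentMk p.1).supp = s := by
          intro p; rw [← coe_inj, Set.coe_toFinset]
        rw [Nat.card_congr ((Equiv.subtypeEquivRight hfiber).trans (componentFiberEquiv _)),
          Nat.card_prod, Nat.card_prod, card_eq_two_pow_choose, Fintype.card_compl_set,
          Nat.card_coe_set_eq, Set.ncard_coe_finset, mul_assoc]
        simp only [coe_sort_coe, Fintype.card_coe]

theorem card_mul_two_pow_choose_eq_sum [Fintype V] :
    Fintype.card V * 2 ^ (Fintype.card V).choose 2 =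
      ∑ k ∈ Icc 1 (Fintype.card V),
        k * (Fintype.card V).choose k * CG k * 2 ^ (Fintype.card V - k).choose 2 := by
  have hCG (s : Finset V) : Nat.card {H : SimpleGraph s // H.Connected} = CG #s :=
    card_connected_congr s.equivFin
  simp only [card_mul_two_pow_choose_eq_sum_finset, hCG]
  rw [← powerset_univ,
    sum_powerset_apply_card fun k => k * CG k * 2 ^ (Fintype.card V - k).choose 2, card_univ, Nat.range_succ_eq_Icc_zero, ← add_sum_Ioc_eq_sum_Icc (Nat.zero_le _),
    ← Icc_add_one_left_eq_Ioc, zero_add]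
  simp [mul_comm, mul_assoc, mul_left_comm]

end SimpleGraph

/-- Gilbert's formula for the number of connected labelled graphs. -/
theorem gilbert_formula (n : ℕ) (hn : 1 ≤ n) :
    (n * 2 ^ n.choose 2 =
        ∑ k ∈ Finset.Icc 1 n, k * n.choose k * CG k * 2 ^ (n - k).choose 2) ∧
      ((CG n : ℚ) = 2 ^ n.choose 2 - (1 / (n : ℚ)) *
        ∑ k ∈ Finset.Icc 1 (n - 1),
          (k : ℚ) * (n.choose k : ℚ) * (CG k : ℚ) * 2 ^ (n - k).choose 2) := by
  have key := SimpleGraph.card_mul_two_pow_choose_eq_sum (V := Fin n)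
  rw [Fintype.card_fin] at key
  refine ⟨key, ?_⟩
  obtain ⟨m, rfl⟩ : ∃ m, n = m + 1 := ⟨n - 1, by omega⟩
  rw [sum_Icc_succ_top (by omega), Nat.choose_self, Nat.sub_self, Nat.choose_zero_succ] at key
  have key_ℚ : ((m + 1 : ℕ) : ℚ) * 2 ^ (m + 1).choose 2 = ∑ k ∈ Icc 1 m,
      (k : ℚ) * ((m + 1).choose k : ℚ) * (CG k : ℚ) * 2 ^ (m + 1 - k).choose 2 +
        (m + 1 : ℕ) * CG (m + 1) := by
    exact_mod_cast (by simpa using key)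
  rw [Nat.add_sub_cancel]
  field_simp
  linarith
end

section
/- (Riddell's formula) The identity of formal power series over ℚ holds: 1 + Σ_{n≥1} G_n · xⁿ/n! = exp( Σ_{n≥1} CG_n · xⁿ/n! ), where G_n = 2^{C(n,2)} is the number of labelled simple graphs on vertex set [n] and CG_n is the number of connected labelled simple graphs on vertex set [n]. -/
open BigOperators

/-- Exponential of a formal power series (with zero constant term):
`exp f = Σ_{c≥0} f^c / c!`; the `n`-th coefficient only involves `c ≤ n`. -/
noncomputable def expPS (f : PowerSeries ℚ) : PowerSeries ℚ :=
  PowerSeries.mk fun n =>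
    PowerSeries.coeff (R := ℚ) n (∑ c ∈ Finset.range (n + 1), (c.factorial : ℚ)⁻¹ • f ^ c)

/-!
Sorting the graphs on `{0, …, n}` by the vertex set `s ∋ 0` of the component of `0` splits
each one into a connected graph on `s` and an arbitrary graph on its complement, so
`2^C(n+1,2) = Σ_j C(n,j) · CG(j+1) · 2^C(n-j,2)`. For the exponential generating functions
`A` of all graphs and `C` of connected graphs this says `A' = C' · A`. The series `exp C`
satisfies the same linear differential equation with the same constant term `1`, and over `ℚ`
a solution of `Y' = C' · Y` is determined by its constant term.
-/

open Finset PowerSeries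

namespace SimpleGraph

variable {V : Type*}

def equivSetNotDiag (V : Type*) : SimpleGraph V ≃ Set {e : Sym2 V // ¬e.IsDiag} where
  toFun G := {e | e.1 ∈ G.edgeSet}
  invFun S := fromEdgeSet (Subtype.val '' S)
  left_inv G := by ext; simpa using Adj.ne
  right_inv S := by ext ⟨e, he⟩; simp [he]

theorem natCard_simpleGraph [Finite V] :
    Nat.card (SimpleGraph V) = 2 ^ (Nat.card V).choose 2 := by
  classical
  have := Fintype.ofFinite V
  rw [Nat.card_congr (equivSetNotDiag V), Set, Nat.card_fun, Nat.card_eq_fintype_card (α := Prop),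
    Fintype.card_prop, Nat.card_eq_fintype_card, Sym2.card_subtype_not_diag,
    Nat.card_eq_fintype_card]

theorem natCard_connected_eq_CG [Finite V] :
    Nat.card {G : SimpleGraph V // G.Connected} = CG (Nat.card V) := by
  let e := Finite.equivFin V
  exact Nat.card_congr (e.simpleGraph.subtypeEquiv fun G =>
    (Iso.comap e.symm G).connected_iff.symm)

theorem Reachable.mem_of_adj_closed {G : SimpleGraph V} {s : Set V}
    (hs : ∀ ⦃a b⦄, G.Adj a b → a ∈ s → b ∈ s) {a b : V} (h : G.Reachable a b) (ha : a ∈ s) :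
    b ∈ s := by
  rw [reachable_iff_reflTransGen] at h
  induction h with
  | refl => exact ha
  | tail _ hbc ih => exact hs hbc ih

theorem connected_induce_of_supp {G : SimpleGraph V} {s : Set V} {v₀ : V}
    (hG : (G.connectedComponentMk v₀).supp = s) : (G.induce s).Connected := by
  subst hG
  exact ConnectedComponent.connected_toSimpleGraph _

variable {s : Set V}

def glue (H : SimpleGraph s) (K : SimpleGraph ↥sᶜ) : SimpleGraph V where
  Adj a b := (∃ (ha : a ∈ s) (hb : b ∈ s), H.Adj ⟨a, ha⟩ ⟨b, hb⟩) ∨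
    (∃ (ha : a ∉ s) (hb : b ∉ s), K.Adj ⟨a, ha⟩ ⟨b, hb⟩)
  symm := ⟨fun _ _ => by
    rintro (⟨ha, hb, h⟩ | ⟨ha, hb, h⟩)
    exacts [Or.inl ⟨hb, ha, h.symm⟩, Or.inr ⟨hb, ha, h.symm⟩]⟩
  loopless := ⟨fun _ => by rintro (⟨_, _, h⟩ | ⟨_, _, h⟩) <;> exact h.ne rfl⟩

variable {H : SimpleGraph s} {K : SimpleGraph ↥sᶜ}

theorem glue_adj {a b : V} : (glue H K).Adj a b ↔
    (∃ (ha : a ∈ s) (hb : b ∈ s), H.Adj ⟨a, ha⟩ ⟨b, hb⟩) ∨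
      (∃ (ha : a ∉ s) (hb : b ∉ s), K.Adj ⟨a, ha⟩ ⟨b, hb⟩) := Iff.rfl

theorem mem_of_glue_adj {a b : V} (h : (glue H K).Adj a b) (ha : a ∈ s) : b ∈ s := by
  rcases h with ⟨_, hb, _⟩ | ⟨ha', _, _⟩
  exacts [hb, absurd ha ha']

def homGlue : H →g glue H K where
  toFun := Subtype.val
  map_rel' {a b} h := Or.inl ⟨a.2, b.2, h⟩

@[simp] theorem induce_glue_left : (glue H K).induce s = H := by
  ext ⟨a, ha⟩ ⟨b, hb⟩
  simp [glue_adj, ha, hb]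

@[simp] theorem induce_glue_right : (glue H K).induce sᶜ = K := by
  ext ⟨a, ha⟩ ⟨b, hb⟩
  simp [glue_adj, Set.notMem_of_mem_compl ha, Set.notMem_of_mem_compl hb]

theorem supp_connectedComponentMk_glue (hH : H.Connected) {v₀ : V} (hv : v₀ ∈ s) :
    ((glue H K).connectedComponentMk v₀).supp = s := by
  ext x
  rw [ConnectedComponent.mem_supp_iff, ConnectedComponent.eq]
  refine ⟨fun h => h.symm.mem_of_adj_closed (fun _ _ => mem_of_glue_adj) hv, fun hx => ?_⟩
  exact (hH.preconnected ⟨x, hx⟩ ⟨v₀, hv⟩).map homGlue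

theorem glue_induce_of_supp {G : SimpleGraph V} {v₀ : V}
    (hG : (G.connectedComponentMk v₀).supp = s) : glue (G.induce s) (G.induce sᶜ) = G := by
  have hs : ∀ {a b}, G.Adj a b → (a ∈ s ↔ b ∈ s) := fun h => by
    rw [← hG]; exact ConnectedComponent.mem_supp_congr_adj _ h
  ext a b
  by_cases ha : a ∈ s
  · simpa [glue_adj, ha] using fun h => (hs h).mp ha
  · simpa [glue_adj, ha] using fun h => mt (hs h).mpr ha

def suppEqEquiv {v₀ : V} (hv : v₀ ∈ s) :
    {G : SimpleGraph V // (G.connectedComponentMk v₀).supp = s} ≃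
      {H : SimpleGraph s // H.Connected} × SimpleGraph ↥sᶜ where
  toFun G := (⟨G.1.induce s, connected_induce_of_supp G.2⟩, G.1.induce sᶜ)
  invFun HK := ⟨glue HK.1.1 HK.2, supp_connectedComponentMk_glue HK.1.2 hv⟩
  left_inv G := Subtype.ext (glue_induce_of_supp G.2)
  right_inv _ := by simp

theorem natCard_supp_eq [Finite V] {v₀ : V} (hv : v₀ ∈ s) :
    Nat.card {G : SimpleGraph V // (G.connectedComponentMk v₀).supp = s} =
      CG (Nat.card s) * 2 ^ (Nat.card ↥sᶜ).choose 2 := by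
  rw [Nat.card_congr (suppEqEquiv hv), Nat.card_prod, natCard_connected_eq_CG,
    natCard_simpleGraph]

theorem natCard_eq_sum_supp [Fintype V] (v₀ : V) :
    Nat.card (SimpleGraph V) =
      ∑ t : Finset V, Nat.card {G : SimpleGraph V // (G.connectedComponentMk v₀).supp = t} := by
  classical
  rw [← Nat.card_sigma]
  refine Nat.card_congr ((Equiv.sigmaFiberEquiv fun G : SimpleGraph V =>
    (G.connectedComponentMk v₀).supp.toFinset).symm.trans
      (Equiv.sigmaCongrRight fun t => Equiv.subtypeEquivRight fun G => ?_))
  rw [← Finset.coe_inj, Set.coe_toFinset]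

end SimpleGraph

theorem Finset.sum_ite_mem_eq_sum_range {V M : Type*} [Fintype V] [DecidableEq V]
    [AddCommMonoid M] (v₀ : V) (F : ℕ → M) :
    ∑ t : Finset V, (if v₀ ∈ t then F #t else 0) =
      ∑ j ∈ range (Fintype.card V), (Fintype.card V - 1).choose j • F (j + 1) := by
  have hv : v₀ ∉ univ.erase v₀ := notMem_erase v₀ univ
  rw [← powerset_univ, ← insert_erase (mem_univ v₀), sum_powerset_insert hv]
  have hout : ∀ t ∈ (univ.erase v₀).powerset, v₀ ∉ t := fun t ht h => hv (mem_powerset.mp ht h)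
  rw [sum_eq_zero fun t ht => if_neg (hout t ht), zero_add, sum_congr rfl fun t ht => by
      rw [if_pos (mem_insert_self v₀ t), card_insert_of_notMem (hout t ht)],
    sum_powerset_apply_card (fun k => F (k + 1)), card_erase_of_mem (mem_univ v₀), card_univ,
    Nat.sub_add_cancel (Fintype.card_pos_iff.mpr ⟨v₀⟩)]

open SimpleGraph in
theorem two_pow_choose_succ_eq_sum (n : ℕ) :
    2 ^ (n + 1).choose 2 =
      ∑ p ∈ antidiagonal n, n.choose p.1 * CG (p.1 + 1) * 2 ^ p.2.choose 2 := by
  have hfiber : ∀ t : Finset (Fin (n + 1)),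
      Nat.card {G : SimpleGraph (Fin (n + 1)) // (G.connectedComponentMk 0).supp = t} =
        if 0 ∈ t then CG #t * 2 ^ (n + 1 - #t).choose 2 else 0 := by
    intro t
    split_ifs with h
    · rw [natCard_supp_eq (mem_coe.mpr h)]
      simp [← coe_compl]
    · have : IsEmpty {G : SimpleGraph (Fin (n + 1)) // (G.connectedComponentMk 0).supp = t} :=
        ⟨fun G => h (by rw [← mem_coe, ← G.2]; exact ConnectedComponent.connectedComponentMk_mem)⟩
      exact Nat.card_of_isEmpty
  rw [← Nat.card_fin (n + 1), ← natCard_simpleGraph, natCard_eq_sum_supp 0]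
  simp only [hfiber]
  rw [sum_ite_mem_eq_sum_range 0 fun k => CG k * 2 ^ (n + 1 - k).choose 2,
    Nat.sum_antidiagonal_eq_sum_range_succ_mk]
  simp [mul_assoc]

namespace PowerSeries

theorem coeff_mul_congr_right {R : Type*} [CommSemiring R] {f g h : R⟦X⟧} {n : ℕ}
    (hgh : ∀ k ≤ n, coeff k g = coeff k h) : coeff n (f * g) = coeff n (f * h) := by
  simp only [coeff_mul]
  exact sum_congr rfl fun p hp => by rw [hgh p.2 (HasAntidiagonal.antidiagonal.snd_le hp)]

theorem eq_of_derivative_eq_mul {R : Type*} [CommRing R] [IsAddTorsionFree R] {g A B : R⟦X⟧}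
    (hA : d⁄dX R A = g * A) (hB : d⁄dX R B = g * B) (h0 : constantCoeff A = constantCoeff B) :
    A = B := by
  ext n
  induction n using Nat.strong_induction_on with
  | _ n ih =>
    rcases n with _ | n
    · simpa using h0
    · have h : (n + 1) • coeff (n + 1) A = (n + 1) • coeff (n + 1) B :=
        calc (n + 1) • coeff (n + 1) A = coeff n (g * A) := by
              rw [← hA, coeff_derivative, nsmul_eq_mul, mul_comm]; push_cast; ring
          _ = coeff n (g * B) := coeff_mul_congr_right fun k hk => ih k (by omega)
          _ = (n + 1) • coeff (n + 1) B := by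
              rw [← hB, coeff_derivative, nsmul_eq_mul, mul_comm]; push_cast; ring
      exact nsmul_right_injective n.succ_ne_zero h

theorem coeff_pow_eq_zero_of_lt {R : Type*} [CommSemiring R] {f : R⟦X⟧}
    (hf : constantCoeff f = 0) {n c : ℕ} (h : n < c) : coeff n (f ^ c) = 0 := by
  obtain ⟨g, rfl⟩ := X_dvd_iff.mpr hf
  rw [mul_pow, coeff_X_pow_mul', if_neg (by omega)]

end PowerSeries

noncomputable def expPartialSum (f : ℚ⟦X⟧) (N : ℕ) : ℚ⟦X⟧ :=
  ∑ c ∈ range N, (c.factorial : ℚ)⁻¹ • f ^ c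

section expPS

variable {f : ℚ⟦X⟧}

theorem coeff_expPS (n : ℕ) : coeff n (expPS f) = coeff n (expPartialSum f (n + 1)) := by
  rw [expPS, coeff_mk, expPartialSum]

theorem coeff_expPartialSum (hf : constantCoeff f = 0) {n N : ℕ} (h : n < N) :
    coeff n (expPartialSum f N) = coeff n (expPS f) := by
  rw [coeff_expPS, expPartialSum, expPartialSum, map_sum, map_sum]
  refine (sum_subset (range_subset_range.mpr h) fun c _ hc => ?_).symm
  rw [map_smul, coeff_pow_eq_zero_of_lt hf (by simpa using hc), smul_zero]

theorem derivative_expPartialSum (N : ℕ) :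
    d⁄dX ℚ (expPartialSum f (N + 1)) = d⁄dX ℚ f * expPartialSum f N := by
  rw [expPartialSum, expPartialSum, sum_range_succ', mul_sum, map_add, map_sum]
  simp only [Nat.factorial_zero, Nat.cast_one, inv_one, one_smul, pow_zero,
    Derivation.map_one_eq_zero, add_zero, Derivation.map_smul, Derivation.leibniz_pow,
    add_tsub_cancel_right]
  refine sum_congr rfl fun c _ => ?_
  rw [← Nat.cast_smul_eq_nsmul ℚ, smul_smul, Nat.factorial_succ, Nat.cast_mul, mul_inv,
    mul_right_comm, inv_mul_cancel₀ (by positivity), one_mul, smul_eq_mul, mul_comm, mul_smul_comm]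

theorem derivative_expPS (hf : constantCoeff f = 0) :
    d⁄dX ℚ (expPS f) = d⁄dX ℚ f * expPS f := by
  ext n
  rw [coeff_derivative, ← coeff_expPartialSum (n := n + 1) (N := n + 2) hf (by omega),
    ← coeff_derivative, derivative_expPartialSum, coeff_mul_congr_right fun k hk =>
      coeff_expPartialSum hf (Nat.lt_succ_of_le hk)]

theorem constantCoeff_expPS (f : ℚ⟦X⟧) : constantCoeff (expPS f) = 1 := by
  simp [expPS]

end expPS

noncomputable def graphEGF : ℚ⟦X⟧ := mk fun n => ((2 ^ n.choose 2 : ℕ) : ℚ) / n.factorial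

noncomputable def connectedGraphEGF : ℚ⟦X⟧ := mk fun n =>
  if n = 0 then 0 else (CG n : ℚ) / n.factorial

theorem derivative_graphEGF : d⁄dX ℚ graphEGF = d⁄dX ℚ connectedGraphEGF * graphEGF := by
  ext n
  have hterm : ∀ p ∈ antidiagonal n,
      coeff p.1 (d⁄dX ℚ connectedGraphEGF) * coeff p.2 graphEGF =
        ((n.choose p.1 * CG (p.1 + 1) * 2 ^ p.2.choose 2 : ℕ) : ℚ) / n.factorial := by
    rintro ⟨i, j⟩ hij
    rw [HasAntidiagonal.mem_antidiagonal] at hij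
    subst hij
    simp only [coeff_derivative, connectedGraphEGF, graphEGF, coeff_mk, if_neg i.succ_ne_zero]
    rw [Nat.cast_mul, Nat.cast_mul, Nat.cast_add_choose, Nat.factorial_succ]
    push_cast
    field_simp
  rw [coeff_mul, sum_congr rfl hterm, ← sum_div, ← Nat.cast_sum, ← two_pow_choose_succ_eq_sum,
    coeff_derivative, graphEGF, coeff_mk, Nat.factorial_succ]
  push_cast
  field_simp

/-- Riddell's formula: `1 + Σ_{n≥1} G_n xⁿ/n! = exp(Σ_{n≥1} CG_n xⁿ/n!)`. -/
theorem riddell_formula :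
    1 + PowerSeries.mk
        (fun n => if n = 0 then 0 else ((2 ^ n.choose 2 : ℕ) : ℚ) / (n.factorial : ℚ)) =
      expPS (PowerSeries.mk fun n =>
        if n = 0 then 0 else (CG n : ℚ) / (n.factorial : ℚ)) := by
  have hC : constantCoeff connectedGraphEGF = 0 := by
    rw [← coeff_zero_eq_constantCoeff_apply, connectedGraphEGF, coeff_mk, if_pos rfl]
  have hA : 1 + mk (fun n => if n = 0 then 0 else ((2 ^ n.choose 2 : ℕ) : ℚ) / n.factorial) =
      graphEGF := by
    ext (_ | n) <;> simp [graphEGF]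
  have hA₀ : constantCoeff graphEGF = constantCoeff (expPS connectedGraphEGF) := by
    rw [constantCoeff_expPS, ← coeff_zero_eq_constantCoeff_apply, graphEGF, coeff_mk]
    simp
  rw [hA]
  exact eq_of_derivative_eq_mul derivative_graphEGF (derivative_expPS hC) hA₀
end

section
/- Let F be a field, n ≥ 2, and let G = ([n], E) be a labelled simple graph with 𝒜_G ≤ Λ(n,F) the alternating matrix space spanned by the elementary alternating matrices A_{i,j} for {i,j} ∈ E. Then G is disconnected if and only if 𝒜_G is orthogonally decomposable. -/
open Matrix BigOperators

/-- The elementary alternating matrix `A_{i,j}`. -/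
def elemAlt (n : ℕ) (F : Type) [Field F] (i j : Fin n) : Matrix (Fin n) (Fin n) F :=
  Matrix.single i j 1 - Matrix.single j i 1

/-- The alternating matrix space `𝒜_G` spanned by the elementary alternating matrices of the
edges of a graph `G`. -/
def graphSpace (n : ℕ) (F : Type) [Field F] (G : SimpleGraph (Fin n)) :
    Submodule F (Matrix (Fin n) (Fin n) F) :=
  Submodule.span F {A | ∃ i j, G.Adj i j ∧ A = elemAlt n F i j}

/-!
Testing `u, w` against `A_{p,q}` gives the `2 × 2` minor `u p * w q - u q * w p`, so an orthogonal
decomposition of `𝒜_G` is one whose summands are pairwise orthogonal for the minor at every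
edge `pq`. If `G` is disconnected, the coordinate subspaces of a connected component and of its
complement form such a decomposition, since no edge joins them.

Conversely, let `Fⁿ = ⨁ U_a` be orthogonal at an edge `pq`, and let `u ∈ U_a` have `u p ≠ 0`.
The functional `v ↦ u p * v q - u q * v p` vanishes on all `U_c` with `c ≠ a` but not on the
standard basis vector `e_q`, so it does not vanish on `U_a`: some `v ∈ U_a` makes `(u, v)`
a basis of `F²` on the coordinates `p, q`, and every vector in another summand, being orthogonal
to both, vanishes at `p` and `q`. Hence the set of vertices where `U_a` is not identically zero
is closed under adjacency, so for connected `G` it is everything, and all other `U_b` vanish.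
-/

open SimpleGraph

lemma SimpleGraph.Reachable.mem_of_forall_adj_s16 {V : Type*} {G : SimpleGraph V} {S : Set V}
    (hS : ∀ p q, G.Adj p q → p ∈ S → q ∈ S) {u v : V} (h : G.Reachable u v) (hu : u ∈ S) :
    v ∈ S := by
  by_contra hv
  obtain ⟨w⟩ := h
  obtain ⟨d, -, hd, hd'⟩ := w.exists_boundary_dart S hu hv
  exact hd' (hS _ _ d.adj hd)

lemma SimpleGraph.exists_set_of_not_preconnected {V : Type*} {G : SimpleGraph V}
    (h : ¬ G.Preconnected) :
    ∃ S : Set V, (∀ p q, G.Adj p q → (p ∈ S ↔ q ∈ S)) ∧ S.Nonempty ∧ Sᶜ.Nonempty := by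
  obtain ⟨a, b, hab⟩ : ∃ a b, ¬ G.Reachable a b := by simpa [Preconnected] using h
  exact ⟨{x | G.Reachable a x},
    fun p q hpq => ⟨fun h => h.trans hpq.reachable, fun h => h.trans hpq.symm.reachable⟩,
    ⟨a, .rfl⟩, ⟨b, hab⟩⟩

section SupportedOn

variable {V : Type*}

def supportedOn (R : Type*) [Semiring R] (S : Set V) : Submodule R (V → R) :=
  Submodule.pi Sᶜ fun _ => ⊥

variable {R : Type*} [Semiring R]

lemma mem_supportedOn {S : Set V} {v : V → R} : v ∈ supportedOn R S ↔ ∀ x ∉ S, v x = 0 := by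
  simp [supportedOn, Submodule.mem_pi]

lemma supportedOn_ne_bot [Nontrivial R] {S : Set V} (hS : S.Nonempty) : supportedOn R S ≠ ⊥ := by
  classical
  obtain ⟨x, hx⟩ := hS
  refine (Submodule.ne_bot_iff _).mpr ⟨Pi.single x 1, ?_, by simp⟩
  exact mem_supportedOn.mpr fun y hy => Pi.single_eq_of_ne (ne_of_mem_of_not_mem hx hy).symm 1

lemma isCompl_supportedOn_compl (S : Set V) : IsCompl (supportedOn R S) (supportedOn R Sᶜ) := by
  refine ⟨Submodule.disjoint_def.mpr fun v h₁ h₂ => ?_, codisjoint_iff.mpr (eq_top_iff.mpr ?_)⟩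
  · funext x
    by_cases hx : x ∈ S
    exacts [mem_supportedOn.mp h₂ x (not_not_intro hx), mem_supportedOn.mp h₁ x hx]
  · rintro v -
    rw [← S.indicator_self_add_compl v]
    exact Submodule.add_mem_sup (mem_supportedOn.mpr fun x hx => Set.indicator_of_notMem hx v)
      (mem_supportedOn.mpr fun x hx => Set.indicator_of_notMem hx v)

end SupportedOn

section GraphSpace

variable {n : ℕ} {F : Type} [Field F] {G : SimpleGraph (Fin n)}

lemma dotProduct_elemAlt_mulVec (i j : Fin n) (u w : Fin n → F) :
    u ⬝ᵥ elemAlt n F i j *ᵥ w = u i * w j - u j * w i := by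
  simp [elemAlt, sub_mulVec, single_mulVec_eq, dotProduct_single, mul_comm]

lemma forall_mem_graphSpace_iff {u w : Fin n → F} :
    (∀ A ∈ graphSpace n F G, u ⬝ᵥ A *ᵥ w = 0) ↔
      ∀ p q, G.Adj p q → u p * w q - u q * w p = 0 := by
  refine ⟨fun h p q hpq => ?_, fun h A hA => ?_⟩
  · rw [← dotProduct_elemAlt_mulVec]
    exact h _ (Submodule.subset_span ⟨p, q, hpq, rfl⟩)
  · induction hA using Submodule.span_induction with
    | mem A hA =>
      obtain ⟨p, q, hpq, rfl⟩ := hA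
      rw [dotProduct_elemAlt_mulVec]
      exact h p q hpq
    | zero => simp
    | add A B _ _ hA hB => rw [add_mulVec, dotProduct_add, hA, hB, add_zero]
    | smul c A _ hA => rw [smul_mulVec, dotProduct_smul, hA, smul_zero]

lemma dotProduct_mulVec_eq_zero_of_mem_supportedOn {S T : Set (Fin n)}
    (hST : ∀ p q, G.Adj p q → p ∈ S → q ∉ T) {u w : Fin n → F}
    (hu : u ∈ supportedOn F S) (hw : w ∈ supportedOn F T) :
    ∀ A ∈ graphSpace n F G, u ⬝ᵥ A *ᵥ w = 0 := by
  refine forall_mem_graphSpace_iff.mpr fun p q hpq => ?_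
  have hpq' : u p * w q = 0 := by
    by_cases hp : p ∈ S
    · rw [mem_supportedOn.mp hw q (hST p q hpq hp), mul_zero]
    · rw [mem_supportedOn.mp hu p hp, zero_mul]
  have hqp : u q * w p = 0 := by
    by_cases hq : q ∈ S
    · rw [mem_supportedOn.mp hw p (hST q p hpq.symm hq), mul_zero]
    · rw [mem_supportedOn.mp hu q hq, zero_mul]
  rw [hpq', hqp, sub_zero]

end GraphSpace

section Decomposition

variable {F V ι : Type*} [Field F] {U : ι → Submodule F (V → F)}

lemma exists_mem_apply_ne_zero (hU : iSup U = ⊤) (p : V) : ∃ a, ∃ u ∈ U a, u p ≠ 0 := by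
  classical
  by_contra! h
  have hker : iSup U ≤ LinearMap.ker (LinearMap.proj p) := iSup_le fun a u hu => h a u hu
  rw [hU] at hker
  simpa using hker (Submodule.mem_top (x := Pi.single p (1 : F)))

lemma apply_eq_zero_of_minor_eq_zero {p q : V} (hpq : p ≠ q) (hU : iSup U = ⊤)
    (horth : ∀ a b, a ≠ b → ∀ u ∈ U a, ∀ w ∈ U b, u p * w q - u q * w p = 0)
    {a b : ι} (hab : a ≠ b) {u w : V → F} (hu : u ∈ U a) (hup : u p ≠ 0) (hw : w ∈ U b) :
    w p = 0 ∧ w q = 0 := by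
  classical
  obtain ⟨v, hv, hdet⟩ : ∃ v ∈ U a, u p * v q - u q * v p ≠ 0 := by
    by_contra! h
    let L : (V → F) →ₗ[F] F := u p • LinearMap.proj q - u q • LinearMap.proj p
    have hker : iSup U ≤ LinearMap.ker L := iSup_le fun c x hx => by
      rcases eq_or_ne c a with rfl | hca
      · simpa [L] using h x hx
      · simpa [L] using horth a c hca.symm u hu x hx
    rw [hU] at hker
    have hLq := hker (Submodule.mem_top (x := Pi.single q (1 : F)))
    simp [L, hpq] at hLq
    exact hup hLq
  have h₁ := horth a b hab u hu w hw
  have h₂ := horth a b hab v hv w hw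
  constructor
  · refine (mul_eq_zero.mp ?_).resolve_right hdet
    linear_combination v p * h₁ - u p * h₂
  · refine (mul_eq_zero.mp ?_).resolve_right hdet
    linear_combination v q * h₁ - u q * h₂

theorem eq_bot_of_preconnected [Nontrivial V] {G : SimpleGraph V} (hG : G.Preconnected)
    (hU : iSup U = ⊤)
    (horth : ∀ a b, a ≠ b → ∀ u ∈ U a, ∀ w ∈ U b, ∀ p q, G.Adj p q →
      u p * w q - u q * w p = 0)
    {a b : ι} (hab : a ≠ b) {u : V → F} (hu : u ∈ U a) (hu₀ : u ≠ 0) : U b = ⊥ := by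
  have hedge {p q : V} (hpq : G.Adj p q) {a b : ι} (hab : a ≠ b) {u w : V → F} (hu : u ∈ U a)
      (hup : u p ≠ 0) (hw : w ∈ U b) : w p = 0 ∧ w q = 0 :=
    apply_eq_zero_of_minor_eq_zero hpq.ne hU
      (fun a b hab u hu w hw => horth a b hab u hu w hw p q hpq) hab hu hup hw
  let S : Set V := {x | ∃ v ∈ U a, v x ≠ 0}
  have hS : ∀ x y, G.Adj x y → x ∈ S → y ∈ S := by
    rintro x y hxy ⟨v, hv, hvx⟩
    obtain ⟨c, v', hv', hv'y⟩ := exists_mem_apply_ne_zero hU y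
    rcases eq_or_ne c a with rfl | hca
    · exact ⟨v', hv', hv'y⟩
    · exact absurd (hedge hxy hca.symm hv hvx hv').2 hv'y
  obtain ⟨p, hp⟩ := Function.ne_iff.mp hu₀
  refine (Submodule.eq_bot_iff _).mpr fun w hw => funext fun x => ?_
  obtain ⟨v, hv, hvx⟩ : x ∈ S := (hG p x).mem_of_forall_adj_s16 hS ⟨u, hu, hp⟩
  obtain ⟨y, hxy⟩ := hG.exists_adj_of_nontrivial x
  exact (hedge hxy hab hv hvx hw).1

end Decomposition

/-- `G` is disconnected iff `𝒜_G` is orthogonally decomposable, i.e. admits a direct sum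
decomposition `Fⁿ = U_1 ⊕ ⋯ ⊕ U_k`, `k ≥ 2`, into nonzero subspaces that are pairwise
orthogonal with respect to every matrix of `𝒜_G`. -/
theorem disconnected_iff_orthogonally_decomposable (n : ℕ) (hn : 2 ≤ n)
    (F : Type) [Field F] (G : SimpleGraph (Fin n)) :
    ¬ G.Connected ↔
      ∃ (k : ℕ), 2 ≤ k ∧ ∃ U : Fin k → Submodule F (Fin n → F),
        DirectSum.IsInternal U ∧ (∀ i, U i ≠ ⊥) ∧
        ∀ i j, i ≠ j → ∀ u ∈ U i, ∀ u' ∈ U j, ∀ A ∈ graphSpace n F G,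
          u ⬝ᵥ A *ᵥ u' = 0 := by
  have : Nontrivial (Fin n) := Fin.nontrivial_iff_two_le.mpr hn
  constructor
  · intro hG
    obtain ⟨S, hS, hS₀, hS₁⟩ := exists_set_of_not_preconnected fun h => hG ⟨h⟩
    refine ⟨2, le_rfl, ![supportedOn F S, supportedOn F Sᶜ], ?_, ?_, ?_⟩
    · refine (DirectSum.isInternal_submodule_iff_isCompl _ zero_ne_one ?_).mpr
        (isCompl_supportedOn_compl S)
      ext i; fin_cases i <;> simp
    · simp [Fin.forall_fin_two, supportedOn_ne_bot hS₀, supportedOn_ne_bot hS₁]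
    · intro i j hij
      fin_cases i <;> fin_cases j
      · exact absurd rfl hij
      · exact fun u hu w hw => dotProduct_mulVec_eq_zero_of_mem_supportedOn
          (fun p q hpq hp => not_not_intro ((hS p q hpq).mp hp)) hu hw
      · exact fun u hu w hw => dotProduct_mulVec_eq_zero_of_mem_supportedOn (S := Sᶜ)
          (fun p q hpq hp hq => hp ((hS p q hpq).mpr hq)) hu hw
      · exact absurd rfl hij
  · rintro ⟨k, hk, U, hInt, hne, horth⟩ hG
    obtain ⟨u, hu, hu₀⟩ := (Submodule.ne_bot_iff _).mp (hne ⟨0, by omega⟩)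
    exact hne ⟨1, by omega⟩ <| eq_bot_of_preconnected hG.preconnected hInt.submodule_iSup_eq_top
      (fun a b hab u hu w hw => forall_mem_graphSpace_iff.mp (horth a b hab u hu w hw))
      (by simp [Fin.ext_iff]) hu hu₀
end

section
/- Let F be a field and G = ([n], E) a labelled simple graph, with 𝒜_G ≤ Λ(n,F) the alternating matrix space spanned by the elementary alternating matrices A_{i,j} for {i,j} ∈ E. Then G hasscheme a perfect matching if and only if 𝒜_G contains an invertible (full-rank) matrix. -/
open Matrix BigOperators

/-!
A perfect matching of `G` is the same as an involution `m` with `v ~ m v` for every vertex.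
Orienting each matching edge from its smaller end gives a matrix `A ∈ 𝒜_G` with `A * A = -1`.

Conversely, expand `det A = ∑ σ, sign σ * ∏ i, A (σ i) i`. Reversing an odd cycle of `σ` keeps
the sign and, `A` being skew, negates the product. Reversing the odd cycle through the least
point lying on an odd cycle is an involution on the permutations having one, so they contribute
nothing to the determinant. Hence if `det A ≠ 0`, some `σ` with only even cycles has every
`A (σ i) i ≠ 0`, so it moves each vertex along an edge of `G`, and every other edge of each
cycle of `σ` forms a perfect matching.
-/

open Function Finset

namespace Equiv.Perm

section Reverse

variable {α : Type*} [Fintype α] [DecidableEq α]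

theorem Disjoint.card_support_cycleOf_mul_inv {f g : Perm α} (h : f.Disjoint g) (x : α) :
    ((f * g⁻¹).cycleOf x).support.card = ((f * g).cycleOf x).support.card := by
  have hcyc : (f.cycleOf x).Disjoint (g.cycleOf x) :=
    h.mono (support_cycleOf_le f x) (support_cycleOf_le g x)
  rw [h.cycleOf_mul_distrib, h.inv_right.cycleOf_mul_distrib, ← cycleOf_inv,
    hcyc.card_support_mul, hcyc.inv_right.card_support_mul, support_inv]

theorem Disjoint.prod_apply_mul_inv {R : Type*} [CommRing R] {A : Matrix α α R}
    (hA : Aᵀ = -A) {f g : Perm α} (h : f.Disjoint g) :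
    ∏ i, A ((f * g⁻¹) i) i = (-1) ^ g.support.card * ∏ i, A ((f * g) i) i := by
  have key (i : α) : A ((f * g⁻¹) (g i)) (g i) =
      (if i ∈ g.support then -1 else 1) * A ((f * g) i) i := by
    simp only [mul_apply, coe_inv, symm_apply_apply]
    by_cases hi : i ∈ g.support
    · have hfi : f i = i := (h i).resolve_right (mem_support.1 hi)
      have hfgi : f (g i) = g i :=
        (h (g i)).resolve_right (mem_support.1 (apply_mem_support.2 hi))
      rw [if_pos hi, hfi, hfgi, neg_one_mul, ← Matrix.neg_apply, ← hA, transpose_apply]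
    · rw [if_neg hi, one_mul, notMem_support.1 hi]
  rw [← Equiv.prod_comp g, Fintype.prod_congr _ _ key, prod_mul_distrib, Fintype.prod_ite_mem,
    prod_const]

/-- `σ` with the cycle through `x` traversed backwards. -/
def reverseCycle (σ : Perm α) (x : α) : Perm α := σ * (σ.cycleOf x)⁻¹ * (σ.cycleOf x)⁻¹

theorem disjoint_mul_inv_cycleOf {σ : Perm α} {x : α} (hx : σ x ≠ x) :
    (σ * (σ.cycleOf x)⁻¹).Disjoint (σ.cycleOf x) :=
  disjoint_mul_inv_of_mem_cycleFactorsFinset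
    (cycleOf_mem_cycleFactorsFinset_iff.2 (mem_support.2 hx))

theorem card_support_cycleOf_reverseCycle {σ : Perm α} {x : α} (hx : σ x ≠ x) (y : α) :
    ((σ.reverseCycle x).cycleOf y).support.card = (σ.cycleOf y).support.card := by
  rw [reverseCycle]
  simpa using (disjoint_mul_inv_cycleOf hx).card_support_cycleOf_mul_inv y

theorem cycleOf_reverseCycle_self {σ : Perm α} {x : α} (hx : σ x ≠ x) :
    (σ.reverseCycle x).cycleOf x = (σ.cycleOf x)⁻¹ := by
  have h := disjoint_mul_inv_cycleOf hx
  have hcx : σ.cycleOf x x ≠ x := by rwa [cycleOf_apply_self]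
  rw [reverseCycle, h.inv_right.cycleOf_mul_distrib, ← cycleOf_inv,
    (σ.isCycle_cycleOf hx).cycleOf_eq hcx, (cycleOf_eq_one_iff _).2 ((h x).resolve_right hcx),
    one_mul]

theorem reverseCycle_reverseCycle {σ : Perm α} {x : α} (hx : σ x ≠ x) :
    (σ.reverseCycle x).reverseCycle x = σ := by
  rw [reverseCycle, cycleOf_reverseCycle_self hx, reverseCycle]
  group

theorem apply_ne_self_of_odd_card_support_cycleOf {σ : Perm α} {x : α}
    (hodd : Odd (σ.cycleOf x).support.card) : σ x ≠ x := fun h => by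
  simp [(cycleOf_eq_one_iff σ).2 h] at hodd

theorem reverseCycle_ne {σ : Perm α} {x : α} (hodd : Odd (σ.cycleOf x).support.card) :
    σ.reverseCycle x ≠ σ := by
  intro h
  have hsq : σ.cycleOf x ^ 2 = 1 := by
    rwa [reverseCycle, mul_assoc, mul_eq_left, ← _root_.mul_inv_rev, inv_eq_one, ← sq] at h
  have hdvd := orderOf_dvd_of_pow_eq_one hsq
  rw [(σ.isCycle_cycleOf (apply_ne_self_of_odd_card_support_cycleOf hodd)).orderOf] at hdvd
  have := Nat.le_of_dvd two_pos hdvd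
  exact card_support_ne_one (σ.cycleOf x) (by obtain ⟨k, hk⟩ := hodd; omega)

@[simp]
theorem sign_reverseCycle (σ : Perm α) (x : α) : sign (σ.reverseCycle x) = sign σ := by
  simp [reverseCycle, mul_assoc]

theorem prod_reverseCycle {R : Type*} [CommRing R] {A : Matrix α α R} (hA : Aᵀ = -A)
    {σ : Perm α} {x : α} (hodd : Odd (σ.cycleOf x).support.card) :
    ∏ i, A (σ.reverseCycle x i) i = -∏ i, A (σ i) i := by
  have h := disjoint_mul_inv_cycleOf (apply_ne_self_of_odd_card_support_cycleOf hodd)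
  rw [reverseCycle]
  simpa [hodd.neg_one_pow] using h.prod_apply_mul_inv hA

end Reverse

section OddCycles

variable {ι : Type*} [Fintype ι] [LinearOrder ι]

def oddCyclePoints (σ : Perm ι) : Finset ι := {x | Odd (σ.cycleOf x).support.card}

theorem oddCyclePoints_reverseCycle {σ : Perm ι} {x : ι} (hx : σ x ≠ x) :
    (σ.reverseCycle x).oddCyclePoints = σ.oddCyclePoints := by
  ext y
  simp [oddCyclePoints, card_support_cycleOf_reverseCycle hx]

def reverseLeastOddCycle (σ : Perm ι) (h : σ.oddCyclePoints.Nonempty) : Perm ι :=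
  σ.reverseCycle (σ.oddCyclePoints.min' h)

theorem sum_sign_mul_prod_eq_zero_of_oddCyclePoints_nonempty {R : Type*} [CommRing R]
    {A : Matrix ι ι R} (hA : Aᵀ = -A) :
    ∑ σ : Perm ι with σ.oddCyclePoints.Nonempty, ((sign σ : ℤ) : R) * ∏ i, A (σ i) i = 0 := by
  refine sum_involution (fun σ hσ => σ.reverseLeastOddCycle (mem_filter.1 hσ).2) ?_ ?_ ?_ ?_
  all_goals
    intro σ hσ
    have hodd := (mem_filter.1 (min'_mem _ (mem_filter.1 hσ).2)).2
    have hx := apply_ne_self_of_odd_card_support_cycleOf hodd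
  · rw [reverseLeastOddCycle, sign_reverseCycle, prod_reverseCycle hA hodd]
    ring
  · exact fun _ => reverseCycle_ne hodd
  · simpa [reverseLeastOddCycle, oddCyclePoints_reverseCycle hx] using (mem_filter.1 hσ).2
  · simp only [reverseLeastOddCycle, oddCyclePoints_reverseCycle hx]
    exact reverseCycle_reverseCycle hx

end OddCycles

section EvenCycles

variable {α : Type*} [Fintype α] [DecidableEq α]

theorem modEq_of_pow_apply_eq_pow_apply {σ : Perm α} {x : α} (hx : σ x ≠ x) {a b : ℕ}
    (h : (σ ^ a) x = (σ ^ b) x) : a ≡ b [MOD (σ.cycleOf x).support.card] := by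
  have hc := σ.isCycle_cycleOf hx
  rw [← hc.orderOf, ← pow_eq_pow_iff_modEq, hc.pow_eq_pow_iff]
  exact ⟨x, by rwa [cycleOf_apply_self],
    by rwa [cycleOf_pow_apply_self, cycleOf_pow_apply_self]⟩

theorem exists_zmod_two_coloring {σ : Perm α} (hσ : ∀ x, σ x ≠ x)
    (heven : ∀ x, Even (σ.cycleOf x).support.card) :
    ∃ f : α → ZMod 2, ∀ x, f (σ x) = f x + 1 := by
  let base (x : α) : α := (Quotient.mk (SameCycle.setoid σ) x).out
  have base_apply (x : α) : base (σ x) = base x :=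
    congrArg Quotient.out (Quotient.sound (sameCycle_apply_left.2 (SameCycle.refl σ x)))
  have exists_pow (x : α) : ∃ k : ℕ, (σ ^ k) (base x) = x :=
    let ⟨k, _, hk⟩ := (Quotient.mk_out (s := SameCycle.setoid σ) x).exists_pow_eq'
    ⟨k, hk⟩
  choose k hk using exists_pow
  refine ⟨fun x => k x, fun x => ?_⟩
  have hmod : k (σ x) ≡ k x + 1 [MOD (σ.cycleOf (base x)).support.card] := by
    refine modEq_of_pow_apply_eq_pow_apply (hσ _) ?_
    rw [← base_apply, hk, base_apply, pow_succ', mul_apply, hk]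
  show (k (σ x) : ZMod 2) = k x + 1
  exact_mod_cast (ZMod.natCast_eq_natCast_iff _ _ _).2
    (hmod.of_dvd (even_iff_two_dvd.1 (heven _)))

theorem exists_involutive_of_even_cycles {σ : Perm α} (hσ : ∀ x, σ x ≠ x)
    (heven : ∀ x, Even (σ.cycleOf x).support.card) :
    ∃ m : α → α, Involutive m ∧ ∀ x, m x = σ x ∨ σ (m x) = x := by
  obtain ⟨f, hf⟩ := exists_zmod_two_coloring hσ heven
  refine ⟨fun x => if f x = 0 then σ x else σ.symm x, fun x => ?_, fun x => ?_⟩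
  · by_cases h : f x = 0
    · simp [h, hf x]
    · have hfσ : f x = f (σ.symm x) + 1 := by simpa using hf (σ.symm x)
      have : f (σ.symm x) = 0 := by
        generalize f x = a at h hfσ
        generalize f (σ.symm x) = b at hfσ ⊢
        decide +revert
      simp [h, this]
  · by_cases h : f x = 0 <;> simp [h]

end EvenCycles

end Equiv.Perm

theorem Matrix.exists_perm_even_cycles_of_det_ne_zero {ι R : Type*} [Fintype ι] [LinearOrder ι]
    [CommRing R] {A : Matrix ι ι R} (hA : Aᵀ = -A) (hdet : A.det ≠ 0) :
    ∃ σ : Equiv.Perm ι, (∀ x, Even (σ.cycleOf x).support.card) ∧ ∀ x, A (σ x) x ≠ 0 := by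
  rw [det_apply', ← sum_filter_add_sum_filter_not univ (fun σ => σ.oddCyclePoints.Nonempty),
    Equiv.Perm.sum_sign_mul_prod_eq_zero_of_oddCyclePoints_nonempty hA, zero_add] at hdet
  obtain ⟨σ, hσ, hne⟩ := exists_ne_zero_of_sum_ne_zero hdet
  refine ⟨σ, fun x => ?_, fun x hx => right_ne_zero_of_mul hne (prod_eq_zero (mem_univ x) hx)⟩
  rw [mem_filter, not_nonempty_iff_eq_empty] at hσ
  simpa [Equiv.Perm.oddCyclePoints] using congrArg (x ∈ ·) hσ.2

theorem SimpleGraph.exists_isPerfectMatching_iff_exists_involutive {V : Type*}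
    (G : SimpleGraph V) :
    (∃ M : G.Subgraph, M.IsPerfectMatching) ↔ ∃ m : V → V, Involutive m ∧ ∀ v, G.Adj v (m v) := by
  simp_rw [Subgraph.isPerfectMatching_iff]
  constructor
  · rintro ⟨M, hM⟩
    choose m hm hmu using hM
    exact ⟨m, fun v => (hmu (m v) v (hm v).symm).symm, fun v => M.adj_sub (hm v)⟩
  · rintro ⟨m, hm, hadj⟩
    refine ⟨{ verts := Set.univ
              Adj v w := w = m v
              adj_sub := by rintro v _ rfl; exact hadj v
              edge_vert := fun _ => trivial
              symm := ⟨fun v w (h : w = m v) => by rw [h, hm v]⟩ }, fun v => existsUnique_eq⟩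

section GraphSpace

variable {n : ℕ} {F : Type} [Field F] {G : SimpleGraph (Fin n)}

theorem transpose_eq_neg_of_mem_graphSpace {A : Matrix (Fin n) (Fin n) F}
    (hA : A ∈ graphSpace n F G) : Aᵀ = -A := by
  induction hA using Submodule.span_induction with
  | mem x hx =>
    obtain ⟨i, j, -, rfl⟩ := hx
    simp [elemAlt]
  | zero => simp
  | add x y _ _ hx hy => rw [transpose_add, hx, hy, neg_add]
  | smul a x _ hx => rw [transpose_smul, hx, smul_neg]

theorem adj_of_mem_graphSpace {A : Matrix (Fin n) (Fin n) F} (hA : A ∈ graphSpace n F G)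
    {i j : Fin n} (h : A i j ≠ 0) : G.Adj i j := by
  contrapose! h
  induction hA using Submodule.span_induction with
  | mem x hx =>
    obtain ⟨a, b, hab, rfl⟩ := hx
    have h₁ : ¬(a = i ∧ b = j) := by rintro ⟨rfl, rfl⟩; exact h hab
    have h₂ : ¬(b = i ∧ a = j) := by rintro ⟨rfl, rfl⟩; exact h hab.symm
    simp [elemAlt, h₁, h₂]
  | zero => simp
  | add x y _ _ hx hy => simp [hx, hy]
  | smul a x _ hx => simp [hx]

def involutionMatrix (F : Type) [Field F] (m : Fin n → Fin n) : Matrix (Fin n) (Fin n) F :=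
  ∑ x with x < m x, elemAlt n F x (m x)

theorem involutionMatrix_mem_graphSpace {m : Fin n → Fin n} (hadj : ∀ x, G.Adj x (m x)) :
    involutionMatrix F m ∈ graphSpace n F G :=
  Submodule.sum_mem _ fun x _ => Submodule.subset_span ⟨x, m x, hadj x, rfl⟩

theorem involutionMatrix_apply {m : Fin n → Fin n} (hm : Involutive m) (hne : ∀ x, m x ≠ x)
    (i j : Fin n) :
    involutionMatrix F m i j = if j = m i then (if i < m i then 1 else -1) else 0 := by
  have h (x : Fin n) : m x = i ↔ x = m i := hm.eq_iff
  simp only [involutionMatrix, elemAlt, Matrix.sum_apply, Matrix.sub_apply, single_apply,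
    sum_sub_distrib, h, ite_and, sum_ite_eq', mem_filter, mem_univ, true_and, hm i]
  obtain rfl | hj := eq_or_ne j (m i)
  · rcases (hne i).lt_or_gt with h' | h' <;> simp [h', h'.not_gt]
  · simp [hj, hj.symm]

theorem involutionMatrix_mul_self {m : Fin n → Fin n} (hm : Involutive m) (hne : ∀ x, m x ≠ x) :
    involutionMatrix F m * involutionMatrix F m = -1 := by
  ext i k
  simp only [mul_apply, involutionMatrix_apply hm hne, ite_mul, zero_mul, sum_ite_eq',
    mem_univ, if_true, hm i, Matrix.neg_apply, one_apply]
  obtain rfl | hik := eq_or_ne i k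
  · rcases (hne i).lt_or_gt with h' | h' <;> simp [h', h'.not_gt]
  · simp [hik, hik.symm]

end GraphSpace

/-- Tutte–Lovász: `G` has a perfect matching iff `𝒜_G` contains a full-rank matrix. -/
theorem perfect_matching_iff_full_rank (n : ℕ) (F : Type) [Field F]
    (G : SimpleGraph (Fin n)) :
    (∃ M : G.Subgraph, M.IsPerfectMatching) ↔
      ∃ A ∈ graphSpace n F G, IsUnit A := by
  rw [G.exists_isPerfectMatching_iff_exists_involutive]
  constructor
  · rintro ⟨m, hm, hadj⟩
    have hne (x : Fin n) : m x ≠ x := (G.ne_of_adj (hadj x)).symm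
    have hsq := involutionMatrix_mul_self (F := F) hm hne
    exact ⟨involutionMatrix F m, involutionMatrix_mem_graphSpace hadj,
      isUnit_iff_exists.2 ⟨-involutionMatrix F m, by simp [hsq], by simp [hsq]⟩⟩
  · rintro ⟨A, hA, hunit⟩
    obtain ⟨σ, heven, hσ⟩ := exists_perm_even_cycles_of_det_ne_zero
      (transpose_eq_neg_of_mem_graphSpace hA) ((isUnit_iff_isUnit_det A).1 hunit).ne_zero
    have hadj (x : Fin n) : G.Adj (σ x) x := adj_of_mem_graphSpace hA (hσ x)
    obtain ⟨m, hm, hmσ⟩ := Equiv.Perm.exists_involutive_of_even_cycles (fun x => (hadj x).ne)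
      heven
    refine ⟨m, hm, fun x => ?_⟩
    rcases hmσ x with h | h
    · exact h ▸ (hadj x).symm
    · simpa [h] using hadj (m x)
end
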